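/- Let L be a c-lattice, 𝔛 an M-closed subset, and k ∈ L with k ∉ 𝔛. If i₁ and i₂ are 𝔛-elements of L with i₁·k = i₂·k, then i₁ = i₂. Moreover, if i ∈ L is such that i·k is an 𝔛-element, then i·k = i. -/

import Mathlib

/-- A multiplicative lattice: a complete lattice with a commutative, associative
multiplication distributing over arbitrary joins, with top as identity. -/
class MultiplicativeLattice (L : Type*) extends CompleteLattice L, CommMonoid L where
  mul_sSup : ∀ (a : L) (S : Set L), a * sSup S = ⨆ b ∈ S, a * b
  one_eq_top : (1 : L) = ⊤

namespace MultiplicativeLattice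

variable {L : Type*}

/-- A subset is M-closed if it is closed under multiplication. -/
def MClosed [MultiplicativeLattice L] (X : Set L) : Prop :=
  ∀ a ∈ X, ∀ b ∈ X, a * b ∈ X

/-- A proper element `i` is an `X`-element if `a * b ≤ i` and `a ∉ X` imply `b ≤ i`. -/
def IsXElement [MultiplicativeLattice L] (X : Set L) (i : L) : Prop :=
  i ≠ ⊤ ∧ ∀ a b : L, a * b ≤ i → a ∉ X → b ≤ i

/-- A prime element. -/
def IsPrime [MultiplicativeLattice L] (p : L) : Prop :=
  p ≠ ⊤ ∧ ∀ a b : L, a * b ≤ p → a ≤ p ∨ b ≤ p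

/-- The residual `(i : a) = ⋁ {x | x * a ≤ i}`. -/
def residual [MultiplicativeLattice L] (i a : L) : L := sSup {x : L | x * a ≤ i}

/-- The radical of an element. -/
def radical [MultiplicativeLattice L] (a : L) : L :=
  sSup {x : L | IsCompactElement x ∧ ∃ n : ℕ, x ^ (n + 1) ≤ a}

/-- A primary element. -/
def IsPrimary [MultiplicativeLattice L] (i : L) : Prop :=
  i ≠ ⊤ ∧ ∀ a b : L, a * b ≤ i → a ≤ i ∨ b ≤ radical i

/-- A minimal prime element. -/
def IsMinimalPrime [MultiplicativeLattice L] (p : L) : Prop :=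
  IsPrime p ∧ ∀ q : L, IsPrime q → q ≤ p → q = p

/-- An `X`-multiplicatively closed subset: a nonempty set `A` of compact elements
containing `L_* \ X`, with `a₁ ∈ L_* \ X` and `a₂ ∈ A` implying `a₁ * a₂ ∈ A`. -/
def IsXMultClosed [MultiplicativeLattice L] (X A : Set L) : Prop :=
  A.Nonempty ∧ (∀ a ∈ A, IsCompactElement a) ∧
    ({c : L | IsCompactElement c} \ X) ⊆ A ∧
    ∀ a₁ ∈ ({c : L | IsCompactElement c} \ X), ∀ a₂ ∈ A, a₁ * a₂ ∈ A

end MultiplicativeLattice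

/-- A c-lattice: a compactly generated multiplicative lattice in which `⊤` is compact
and the product of compact elements is compact. -/
class CLattice (L : Type*) extends MultiplicativeLattice L where
  compactlyGenerated : ∀ x : L,
    x = sSup {c : L | IsCompactElement c ∧ c ≤ x}
  compact_top : IsCompactElement (⊤ : L)
  compact_mul : ∀ a b : L, IsCompactElement a →
    IsCompactElement b → IsCompactElement (a * b)

open MultiplicativeLattice CompleteLattice

namespace MultiplicativeLattice

variable {L : Type*} [MultiplicativeLattice L]

theorem mul_sup (a b c : L) : a * (b ⊔ c) = a * b ⊔ a * c := by
  rw [← sSup_pair, mul_sSup, iSup_pair]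

theorem mul_le_mul_of_le_right {b c : L} (h : b ≤ c) (a : L) : a * b ≤ a * c := by
  rw [← sup_eq_right.mpr h, mul_sup]
  exact le_sup_left

theorem mul_le_right (a b : L) : a * b ≤ a :=
  calc a * b ≤ a * ⊤ := mul_le_mul_of_le_right le_top a
    _ = a := by rw [← one_eq_top, mul_one]

theorem IsXElement.le_of_mul_le {X : Set L} {i k j : L} (hi : IsXElement X i) (hk : k ∉ X)
    (h : j * k ≤ i) : j ≤ i :=
  hi.2 k j (by rwa [mul_comm]) hk

end MultiplicativeLattice

theorem stmt16_general {L : Type*} [CLattice L] (X : Set L)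
    (k : L) (hk : k ∉ X) (i₁ i₂ : L) (h1 : IsXElement X i₁) (h2 : IsXElement X i₂)
    (heq : i₁ * k = i₂ * k) :
    i₁ = i₂ ∧ ∀ i : L, IsXElement X (i * k) → i * k = i := by
  refine ⟨le_antisymm ?_ ?_, fun i hi => le_antisymm (mul_le_right i k) (hi.le_of_mul_le hk le_rfl)⟩
  · exact h2.le_of_mul_le hk (heq ▸ mul_le_right i₂ k)
  · exact h1.le_of_mul_le hk (heq ▸ mul_le_right i₁ k)

theorem stmt16 {L : Type*} [CLattice L] (X : Set L) (hX : MClosed X)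
    (k : L) (hk : k ∉ X) (i₁ i₂ : L) (h1 : IsXElement X i₁) (h2 : IsXElement X i₂)
    (heq : i₁ * k = i₂ * k) :
    i₁ = i₂ ∧ ∀ i : L, IsXElement X (i * k) → i * k = i :=
  stmt16_general X k hk i₁ i₂ h1 h2 heq
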